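/- Let T be an ℕ-graded ring with grading 𝒜 : ℕ → AddSubgroup T, and let A be a right ideal of T whose right annihilator A^r is non-zero. Then A^r contains a non-trivial graded (two-sided) ideal of T, i.e. there is a two-sided ideal I ≠ {0} of T with I ⊆ A^r such that for every z ∈ I all homogeneous components of z again lie in I. -/
import Mathlib

open DirectSum Finset
open scoped Classical

section aux

variable {T : Type*} [Ring T] (𝒜 : ℕ → AddSubgroup T) [GradedRing 𝒜]

/-- Degree-`n` component, as an additive monoid hom. -/
noncomputable def myCpt (n : ℕ) : T →+ T where
  toFun x := (DirectSum.decompose 𝒜 x n : T)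
  map_zero' := by simp
  map_add' x y := by simp

lemma myCpt_apply (n : ℕ) (x : T) : myCpt 𝒜 n x = (DirectSum.decompose 𝒜 x n : T) := rfl

lemma myCpt_mem (n : ℕ) (x : T) : myCpt 𝒜 n x ∈ 𝒜 n := SetLike.coe_mem _

lemma myCpt_of_mem {x : T} {j : ℕ} (hx : x ∈ 𝒜 j) (n : ℕ) :
    myCpt 𝒜 n x = if n = j then x else 0 := by
  rcases eq_or_ne n j with h | h
  · rw [if_pos h]; subst h; exact DirectSum.decompose_of_mem_same 𝒜 hx
  · rw [if_neg h]; exact DirectSum.decompose_of_mem_ne 𝒜 hx h.symm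

/-- homogeneous support of an element -/
noncomputable def mySupp (x : T) : Finset ℕ := (DirectSum.decompose 𝒜 x).support

lemma sum_mySupp (x : T) : ∑ i ∈ mySupp 𝒜 x, myCpt 𝒜 i x = x :=
  DirectSum.sum_support_decompose 𝒜 x

lemma mem_mySupp {x : T} {i : ℕ} : i ∈ mySupp 𝒜 x ↔ myCpt 𝒜 i x ≠ 0 := by
  rw [mySupp, DFinsupp.mem_support_iff, myCpt_apply, ne_eq, ne_eq,
    ZeroMemClass.coe_eq_zero]

lemma mySupp_nonempty {x : T} (hx : x ≠ 0) : (mySupp 𝒜 x).Nonempty := by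
  rw [Finset.nonempty_iff_ne_empty]
  intro h
  apply hx
  rw [← sum_mySupp 𝒜 x, h, Finset.sum_empty]

lemma mySupp_hom {x : T} {j : ℕ} (hx : x ∈ 𝒜 j) (h0 : x ≠ 0) : mySupp 𝒜 x = {j} := by
  ext n
  rw [mem_mySupp, myCpt_of_mem 𝒜 hx n, Finset.mem_singleton]
  split_ifs with h
  · exact iff_of_true h0 h
  · exact iff_of_false (by simp) h

lemma myCpt_sum (s : Finset ℕ) (f : ℕ → T) (n : ℕ) :
    myCpt 𝒜 n (∑ i ∈ s, f i) = ∑ i ∈ s, myCpt 𝒜 n (f i) :=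
  map_sum _ _ _

lemma mymul_expand (x y : T) :
    x * y = ∑ i ∈ mySupp 𝒜 x, ∑ l ∈ mySupp 𝒜 y, myCpt 𝒜 i x * myCpt 𝒜 l y := by
  conv_lhs => rw [← sum_mySupp 𝒜 x, ← sum_mySupp 𝒜 y]
  rw [Finset.sum_mul]
  exact Finset.sum_congr rfl fun i _ => Finset.mul_sum _ _ _

lemma myCpt_mul (x y : T) (n : ℕ) :
    myCpt 𝒜 n (x * y) = ∑ i ∈ mySupp 𝒜 x, ∑ l ∈ mySupp 𝒜 y,
      if n = i + l then myCpt 𝒜 i x * myCpt 𝒜 l y else 0 := by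
  rw [mymul_expand 𝒜 x y, myCpt_sum]
  refine Finset.sum_congr rfl fun i _ => ?_
  rw [myCpt_sum]
  refine Finset.sum_congr rfl fun l _ => ?_
  exact myCpt_of_mem 𝒜 (SetLike.mul_mem_graded (myCpt_mem 𝒜 i x) (myCpt_mem 𝒜 l y)) n

/-- top-homogeneous components of a vanishing product multiply to zero -/
lemma mytop (x y : T) (hx : (mySupp 𝒜 x).Nonempty) (hy : (mySupp 𝒜 y).Nonempty)
    (hxy : x * y = 0) :
    myCpt 𝒜 ((mySupp 𝒜 x).max' hx) x * myCpt 𝒜 ((mySupp 𝒜 y).max' hy) y = 0 := by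
  set m := (mySupp 𝒜 x).max' hx with hm
  set nk := (mySupp 𝒜 y).max' hy with hnk
  have h0 : myCpt 𝒜 (m + nk) (x * y) = 0 := by rw [hxy, map_zero]
  rw [myCpt_mul, Finset.sum_eq_single_of_mem m (Finset.max'_mem _ hx)
      (fun i hi hine => Finset.sum_eq_zero fun l hl => if_neg (by
        have h1 := Finset.le_max' _ i hi
        have h2 := Finset.le_max' _ l hl
        omega)),
    Finset.sum_eq_single_of_mem nk (Finset.max'_mem _ hy)
      (fun l hl hlne => if_neg (by
        have h2 := Finset.le_max' _ l hl
        omega)),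
    if_pos rfl] at h0
  exact h0

end aux

/-- Let `T` be an `ℕ`-graded ring and `A` a right ideal of `T` whose right annihilator is
non-zero.  Then the right annihilator of `A` contains a non-trivial graded two-sided ideal
of `T`: an additive subgroup `I ≠ {0}`, closed under left and right multiplication by
arbitrary elements of `T`, contained in the right annihilator of `A`, and containing all
homogeneous components of each of its elements. -/
theorem annihilator_contains_graded_ideal_of_nGraded
    {T : Type*} [Ring T] (𝒜 : ℕ → AddSubgroup T) [GradedRing 𝒜]
    (A : AddSubgroup T) (hA : ∀ a ∈ A, ∀ t : T, a * t ∈ A)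
    (hann : ∃ t : T, t ≠ 0 ∧ ∀ a ∈ A, a * t = 0) :
    ∃ I : AddSubgroup T,
      (∀ z ∈ I, ∀ t : T, z * t ∈ I ∧ t * z ∈ I) ∧
      I ≠ ⊥ ∧
      (∀ z ∈ I, ∀ a ∈ A, a * z = 0) ∧
      (∀ z ∈ I, ∀ j : ℕ, (DirectSum.decompose 𝒜 z j : T) ∈ I) := by
  classical
  -- the right annihilator predicate
  set Rm : T → Prop := fun x => ∀ a ∈ A, a * x = 0 with hRm
  have hR0 : Rm 0 := fun a _ => mul_zero a
  have hRadd : ∀ x y, Rm x → Rm y → Rm (x + y) := fun x y hx hy a ha => by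
    rw [mul_add, hx a ha, hy a ha, add_zero]
  have hRneg : ∀ x, Rm x → Rm (-x) := fun x hx a ha => by
    rw [mul_neg, hx a ha, neg_zero]
  have hRsum : ∀ (s : Finset ℕ) (f : ℕ → T), (∀ i ∈ s, Rm (f i)) → Rm (∑ i ∈ s, f i) :=
    fun s f hf a ha => by
      rw [Finset.mul_sum]
      exact Finset.sum_eq_zero fun i hi => hf i hi a ha
  have hRmulr : ∀ x s, Rm x → Rm (x * s) := fun x s hx a ha => by
    rw [← mul_assoc, hx a ha, zero_mul]
  have hRmull : ∀ x s, Rm x → Rm (s * x) := fun x s hx a ha => by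
    rw [← mul_assoc]
    exact hx _ (hA a ha s)
  -- minimal-support nonzero annihilating element
  obtain ⟨t0, ht0ne, ht0R⟩ := hann
  have hex : ∃ n, ∃ x : T, Rm x ∧ x ≠ 0 ∧ (mySupp 𝒜 x).card = n :=
    ⟨_, t0, ht0R, ht0ne, rfl⟩
  obtain ⟨t, htR, htne, htcard⟩ := Nat.find_spec hex
  have hmin : ∀ x : T, Rm x → (mySupp 𝒜 x).card < Nat.find hex → x = 0 := by
    intro x hx hcard
    by_contra hne
    exact Nat.find_min hex hcard ⟨x, hx, hne, rfl⟩
  have htnonempty : (mySupp 𝒜 t).Nonempty := mySupp_nonempty 𝒜 htne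
  set nk : ℕ := (mySupp 𝒜 t).max' htnonempty with hnkdef
  have hnkmem : nk ∈ mySupp 𝒜 t := Finset.max'_mem _ htnonempty
  have htnkne : myCpt 𝒜 nk t ≠ 0 := (mem_mySupp 𝒜).mp hnkmem
  -- Claim A: every homogeneous component of any left-annihilator of t kills t
  have claimA : ∀ N : ℕ, ∀ x : T, (mySupp 𝒜 x).card ≤ N → x * t = 0 →
      ∀ i, myCpt 𝒜 i x * t = 0 := by
    intro N
    induction N with
    | zero =>
      intro x hcard _ i
      have hxe : mySupp 𝒜 x = ∅ := Finset.card_eq_zero.mp (Nat.le_zero.mp hcard)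
      have hx0 : x = 0 := by rw [← sum_mySupp 𝒜 x, hxe, Finset.sum_empty]
      rw [hx0, map_zero, zero_mul]
    | succ N ih =>
      intro x hcard hxt i
      by_cases hxe : x = 0
      · rw [hxe, map_zero, zero_mul]
      have hne : (mySupp 𝒜 x).Nonempty := mySupp_nonempty 𝒜 hxe
      set m : ℕ := (mySupp 𝒜 x).max' hne with hmdef
      -- step 1: top components multiply to zero
      have h1 : myCpt 𝒜 m x * myCpt 𝒜 nk t = 0 := mytop 𝒜 x t hne htnonempty hxt
      -- step 2: x_m * t is an annihilator with smaller support, hence zero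
      have h2 : Rm (myCpt 𝒜 m x * t) := fun a ha => by
        rw [← mul_assoc]
        exact htR _ (hA a ha _)
      have hexp : myCpt 𝒜 m x * t = ∑ l ∈ mySupp 𝒜 t, myCpt 𝒜 m x * myCpt 𝒜 l t := by
        conv_lhs => rw [← sum_mySupp 𝒜 t, Finset.mul_sum]
      have h3 : mySupp 𝒜 (myCpt 𝒜 m x * t) ⊆
          ((mySupp 𝒜 t).erase nk).image (fun l => m + l) := by
        intro n hn
        rw [mem_mySupp] at hn
        by_contra hni
        apply hn
        rw [hexp, myCpt_sum]
        refine Finset.sum_eq_zero fun l hl => ?_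
        rw [myCpt_of_mem 𝒜 (SetLike.mul_mem_graded (myCpt_mem 𝒜 m x) (myCpt_mem 𝒜 l t)) n]
        split_ifs with hcase
        · rcases eq_or_ne l nk with rfl | hlnk
          · exact h1
          · exact absurd (Finset.mem_image.mpr ⟨l, Finset.mem_erase.mpr ⟨hlnk, hl⟩,
              hcase.symm⟩) hni
        · rfl
      have h4 : (mySupp 𝒜 (myCpt 𝒜 m x * t)).card < Nat.find hex := by
        have c1 := Finset.card_le_card h3
        have c2 := Finset.card_image_le (s := (mySupp 𝒜 t).erase nk) (f := fun l => m + l)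
        have c3 : ((mySupp 𝒜 t).erase nk).card = (mySupp 𝒜 t).card - 1 :=
          Finset.card_erase_of_mem hnkmem
        have c4 : 0 < (mySupp 𝒜 t).card := Finset.card_pos.mpr htnonempty
        omega
      have h5 : myCpt 𝒜 m x * t = 0 := hmin _ h2 h4
      -- step 3: induct on x - x_m
      have h6 : (x - myCpt 𝒜 m x) * t = 0 := by rw [sub_mul, hxt, h5, sub_zero]
      have h7 : mySupp 𝒜 (x - myCpt 𝒜 m x) = (mySupp 𝒜 x).erase m := by
        ext n
        rw [mem_mySupp, Finset.mem_erase, mem_mySupp, map_sub,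
          myCpt_of_mem 𝒜 (myCpt_mem 𝒜 m x) n]
        rcases eq_or_ne n m with rfl | hnm
        · simp
        · rw [if_neg hnm, sub_zero]
          exact (and_iff_right hnm).symm
      have h8 : (mySupp 𝒜 (x - myCpt 𝒜 m x)).card ≤ N := by
        rw [h7, Finset.card_erase_of_mem (Finset.max'_mem _ hne)]
        omega
      have h9 := ih (x - myCpt 𝒜 m x) h8 h6
      rcases eq_or_ne i m with rfl | him
      · exact h5
      · have := h9 i
        rw [map_sub, myCpt_of_mem 𝒜 (myCpt_mem 𝒜 m x) i, if_neg him, sub_zero] at this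
        exact this
  -- Claim B: the top component of t is annihilated by A
  have claimB : Rm (myCpt 𝒜 nk t) := by
    intro a ha
    have hall : ∀ i, myCpt 𝒜 i a * t = 0 :=
      claimA (mySupp 𝒜 a).card a le_rfl (htR a ha)
    have hterm : ∀ i, myCpt 𝒜 i a * myCpt 𝒜 nk t = 0 := by
      intro i
      by_cases h0 : myCpt 𝒜 i a = 0
      · rw [h0, zero_mul]
      have hs : mySupp 𝒜 (myCpt 𝒜 i a) = {i} := mySupp_hom 𝒜 (myCpt_mem 𝒜 i a) h0
      have hne1 : (mySupp 𝒜 (myCpt 𝒜 i a)).Nonempty := mySupp_nonempty 𝒜 h0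
      have hkey := mytop 𝒜 (myCpt 𝒜 i a) t hne1 htnonempty (hall i)
      have hmax : (mySupp 𝒜 (myCpt 𝒜 i a)).max' hne1 = i := by
        have : i ∈ mySupp 𝒜 (myCpt 𝒜 i a) := by rw [hs]; exact Finset.mem_singleton_self i
        refine le_antisymm (Finset.max'_le _ _ _ fun y hy => ?_) (Finset.le_max' _ i this)
        rw [hs, Finset.mem_singleton] at hy
        exact le_of_eq hy
      rw [hmax, myCpt_of_mem 𝒜 (myCpt_mem 𝒜 i a) i, if_pos rfl] at hkey
      exact hkey
    conv_lhs => rw [← sum_mySupp 𝒜 a, Finset.sum_mul]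
    exact Finset.sum_eq_zero fun i _ => hterm i
  -- the graded ideal
  set I : AddSubgroup T :=
    { carrier := { z | ∀ j, Rm (myCpt 𝒜 j z) }
      zero_mem' := fun j => by rw [map_zero]; exact hR0
      add_mem' := fun {x y} hx hy j => by rw [map_add]; exact hRadd _ _ (hx j) (hy j)
      neg_mem' := fun {x} hx j => by rw [map_neg]; exact hRneg _ (hx j) } with hI
  have hmemI : ∀ z : T, z ∈ I ↔ ∀ j, Rm (myCpt 𝒜 j z) := fun z => Iff.rfl
  refine ⟨I, ?_, ?_, ?_, ?_⟩
  · -- two-sided multiplicative closure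
    intro z hz s
    rw [hmemI] at hz
    constructor
    · rw [hmemI]
      intro j
      rw [myCpt_mul 𝒜 z s j]
      refine hRsum _ _ fun i _ => hRsum _ _ fun l _ => ?_
      split_ifs with h
      · exact hRmulr _ _ (hz i)
      · exact hR0
    · rw [hmemI]
      intro j
      rw [myCpt_mul 𝒜 s z j]
      refine hRsum _ _ fun i _ => hRsum _ _ fun l _ => ?_
      split_ifs with h
      · exact hRmull _ _ (hz l)
      · exact hR0
  · -- nontriviality
    intro hbot
    apply htnkne
    have hmem : myCpt 𝒜 nk t ∈ I := by
      rw [hmemI]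
      intro j
      rw [myCpt_of_mem 𝒜 (myCpt_mem 𝒜 nk t) j]
      split_ifs with h
      · exact claimB
      · exact hR0
    rw [hbot, AddSubgroup.mem_bot] at hmem
    exact hmem
  · -- contained in the right annihilator
    intro z hz a ha
    rw [hmemI] at hz
    conv_lhs => rw [← sum_mySupp 𝒜 z, Finset.mul_sum]
    exact Finset.sum_eq_zero fun j _ => hz j a ha
  · -- gradedness
    intro z hz j
    rw [hmemI] at hz
    rw [hmemI]
    intro n
    rw [show ((DirectSum.decompose 𝒜 z j : T)) = myCpt 𝒜 j z from rfl,
      myCpt_of_mem 𝒜 (myCpt_mem 𝒜 j z) n]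
    split_ifs with h
    · exact hz j
    · exact hR0
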